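/- arXiv:1702.06422 — 2 statements merged into one kernel-verified Lean document; each statement's English description precedes it below -/
import Mathlib

section
/- For all non-negative integers n and p, ∫_{-1}^{0} (1+y)^p · w_n(x; y) dy = B_{n,p}(x)/(p+1), where w_n(x;y) is the two-variable geometric polynomial. -/
def stirling2 : ℕ → ℕ → ℕ
  | 0, 0 => 1
  | 0, _ + 1 => 0
  | _ + 1, 0 => 0
  | n + 1, k + 1 => (k + 1) * stirling2 n (k + 1) + stirling2 n k

def pBernoulli : ℕ → ℕ → ℚ
  | 0, _ => 1
  | n + 1, p => p * pBernoulli n p - ((p + 1 : ℚ) ^ 2 / (p + 2)) * pBernoulli n (p + 1)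

def geomPoly (n : ℕ) (y : ℝ) : ℝ :=
  ∑ k ∈ Finset.range (n + 1), (stirling2 n k : ℝ) * (Nat.factorial k : ℝ) * y ^ k

/-- The two-variable geometric polynomials `w_n(x;y) = ∑ C(n,k) w_k(y) x^{n-k}`. -/
def geomPoly2 (n : ℕ) (x y : ℝ) : ℝ :=
  ∑ k ∈ Finset.range (n + 1), (n.choose k : ℝ) * geomPoly k y * x ^ (n - k)

/-- The p-Bernoulli polynomials `B_{n,p}(x) = ∑ C(n,k) x^{n-k} B_{k,p}`. -/
def pBernoulliPoly (n p : ℕ) (x : ℝ) : ℝ :=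
  ∑ k ∈ Finset.range (n + 1), (n.choose k : ℝ) * x ^ (n - k) * (pBernoulli k p : ℝ)

/-!
Write `J k p = ∫_{-1}^0 (1 + y)^p y^k dy`. Since `(1 + y)^(p+1) y^(k+1)` vanishes at both ends,
integration by parts gives `(p + 1) J (k+1) p + (k + 1) J k (p+1) = 0`; together with
`J k (p+1) = J k p + J (k+1) p` this says
`p J k p - (p + 1) J k (p+1) = k J k p + (k + 1) J (k+1) p`.
Weighted by `k! S(n,k)` and summed, the right-hand side is exactly what the Stirling recurrence
`S(n+1,k+1) = (k+1) S(n,k+1) + S(n,k)` produces, so `I n p = ∫_{-1}^0 (1 + y)^p w_n(y) dy` obeys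
`I (n+1) p = p I n p - (p + 1) I n (p+1)`, which is the defining recurrence of `B_{n,p} / (p + 1)`.
The two-variable statement follows by linearity in `y`.
-/

open Finset intervalIntegral

theorem stirling2_eq_stirlingSecond : stirling2 = Nat.stirlingSecond := by
  funext n k
  induction n generalizing k with
  | zero => cases k <;> rfl
  | succ n ih => cases k <;> simp [stirling2, Nat.stirlingSecond_succ_succ, ih]

theorem sum_range_stirlingSecond_succ_mul {R : Type*} [CommSemiring R] (n : ℕ) (g : ℕ → R) :
    ∑ k ∈ range (n + 1 + 1), (Nat.stirlingSecond (n + 1) k : R) * g k =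
      ∑ k ∈ range (n + 1), (Nat.stirlingSecond n k : R) * (k * g k + g (k + 1)) := by
  have shift : ∑ k ∈ range (n + 1), ((k : R) + 1) * Nat.stirlingSecond n (k + 1) * g (k + 1) =
      ∑ k ∈ range (n + 1), (k : R) * Nat.stirlingSecond n k * g k := by
    have h := sum_range_succ' (fun k => (k : R) * Nat.stirlingSecond n k * g k) (n + 1)
    rw [sum_range_succ, Nat.stirlingSecond_eq_zero_of_lt (Nat.lt_succ_self n)] at h
    simpa using h.symm
  calc ∑ k ∈ range (n + 1 + 1), (Nat.stirlingSecond (n + 1) k : R) * g k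
      = ∑ k ∈ range (n + 1), ((k : R) + 1) * Nat.stirlingSecond n (k + 1) * g (k + 1) +
          ∑ k ∈ range (n + 1), (Nat.stirlingSecond n k : R) * g (k + 1) := by
        simp [sum_range_succ' _ (n + 1), Nat.stirlingSecond_succ_succ, add_mul, sum_add_distrib]
    _ = _ := by
        rw [shift, ← sum_add_distrib]
        exact sum_congr rfl fun k _ => by ring

noncomputable def betaMoment (k p : ℕ) : ℝ := ∫ y in (-1 : ℝ)..0, (1 + y) ^ p * y ^ k

theorem intervalIntegrable_one_add_pow_mul_pow (k p : ℕ) {a b : ℝ} :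
    IntervalIntegrable (fun y : ℝ => (1 + y) ^ p * y ^ k) MeasureTheory.volume a b :=
  (by fun_prop : Continuous fun y : ℝ => (1 + y) ^ p * y ^ k).intervalIntegrable a b

theorem betaMoment_zero_left (p : ℕ) : betaMoment 0 p = 1 / (p + 1) := by
  simp only [betaMoment, pow_zero, mul_one, add_comm (1 : ℝ)]
  rw [integral_comp_add_right (· ^ p), integral_pow]
  norm_num

theorem betaMoment_succ_right (k p : ℕ) :
    betaMoment k (p + 1) = betaMoment k p + betaMoment (k + 1) p := by
  rw [betaMoment, betaMoment, betaMoment,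
    ← integral_add (intervalIntegrable_one_add_pow_mul_pow ..)
      (intervalIntegrable_one_add_pow_mul_pow ..)]
  congr 1 with y
  ring

theorem betaMoment_parts (k p : ℕ) :
    (p + 1) * betaMoment (k + 1) p + (k + 1) * betaMoment k (p + 1) = 0 := by
  have hu (y : ℝ) : HasDerivAt (fun y : ℝ => (1 + y) ^ (p + 1)) ((p + 1) * (1 + y) ^ p) y := by
    simpa using ((hasDerivAt_id y).const_add 1).fun_pow (p + 1)
  have hv (y : ℝ) : HasDerivAt (fun y : ℝ => y ^ (k + 1)) ((k + 1) * y ^ k) y := by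
    simpa using hasDerivAt_pow (k + 1) y
  have h := integral_deriv_mul_eq_sub (a := -1) (b := 0) (fun y _ => hu y) (fun y _ => hv y)
    ((by fun_prop : Continuous _).intervalIntegrable _ _)
    ((by fun_prop : Continuous _).intervalIntegrable _ _)
  rw [betaMoment, betaMoment, ← integral_const_mul, ← integral_const_mul,
    ← integral_add ((intervalIntegrable_one_add_pow_mul_pow ..).const_mul _)
      ((intervalIntegrable_one_add_pow_mul_pow ..).const_mul _)]
  convert h using 1
  · congr 1 with y
    ring
  · simp

theorem betaMoment_recurrence (k p : ℕ) :
    p * betaMoment k p - (p + 1) * betaMoment k (p + 1) =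
      k * betaMoment k p + (k + 1) * betaMoment (k + 1) p := by
  linear_combination ((k : ℝ) - p) * betaMoment_succ_right k p - betaMoment_parts k p

@[fun_prop]
theorem continuous_geomPoly (n : ℕ) : Continuous (geomPoly n) := by
  unfold geomPoly
  fun_prop

theorem integral_one_add_pow_mul_geomPoly_eq_sum (n p : ℕ) :
    ∫ y in (-1 : ℝ)..0, (1 + y) ^ p * geomPoly n y =
      ∑ k ∈ range (n + 1), (Nat.stirlingSecond n k : ℝ) * (k.factorial * betaMoment k p) := by
  simp only [geomPoly, mul_sum, stirling2_eq_stirlingSecond]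
  rw [integral_finsetSum fun k _ => Continuous.intervalIntegrable (by fun_prop) _ _]
  refine sum_congr rfl fun k _ => ?_
  rw [betaMoment, ← integral_const_mul, ← integral_const_mul]
  congr 1 with y
  ring

theorem integral_one_add_pow_mul_geomPoly_succ (n p : ℕ) :
    ∫ y in (-1 : ℝ)..0, (1 + y) ^ p * geomPoly (n + 1) y =
      p * (∫ y in (-1 : ℝ)..0, (1 + y) ^ p * geomPoly n y) -
        (p + 1) * ∫ y in (-1 : ℝ)..0, (1 + y) ^ (p + 1) * geomPoly n y := by
  simp only [integral_one_add_pow_mul_geomPoly_eq_sum, sum_range_stirlingSecond_succ_mul, mul_sum,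
    ← sum_sub_distrib]
  refine sum_congr rfl fun k _ => ?_
  push_cast [Nat.factorial_succ]
  linear_combination -(Nat.stirlingSecond n k * k.factorial : ℝ) * betaMoment_recurrence k p

theorem integral_one_add_pow_mul_geomPoly (n p : ℕ) :
    ∫ y in (-1 : ℝ)..0, (1 + y) ^ p * geomPoly n y = pBernoulli n p / (p + 1) := by
  induction n generalizing p with
  | zero => simp [integral_one_add_pow_mul_geomPoly_eq_sum, betaMoment_zero_left, pBernoulli]
  | succ n ih =>
    rw [integral_one_add_pow_mul_geomPoly_succ, ih, ih, pBernoulli]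
    push_cast
    field_simp
    ring

theorem integral_geomPoly2 (n p : ℕ) (x : ℝ) :
    ∫ y in (-1 : ℝ)..0, (1 + y) ^ p * geomPoly2 n x y = pBernoulliPoly n p x / (p + 1) := by
  simp only [geomPoly2, pBernoulliPoly, mul_sum, sum_div]
  rw [integral_finsetSum fun k _ => Continuous.intervalIntegrable (by fun_prop) _ _]
  refine sum_congr rfl fun k _ => ?_
  rw [mul_div_assoc, ← integral_one_add_pow_mul_geomPoly, ← integral_const_mul]
  congr 1 with y
  ring
end

section
/- For n ≥ 1 and p ≥ 1, the p-Bernoulli polynomials have a Raabe-type source identity: m^{n-1} · ∑_{k=0}^{m-1} w_{n-1}(x + k/m; y) · (n·y) = ∑_{k=1}^{n} C(n,k) · m^k · B_{n-k}(mx) · w_k(y), for all m ≥ 1, as an identity of polynomials in x and y. -/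
noncomputable def bernoulliPolyR (n : ℕ) (x : ℝ) : ℝ :=
  Polynomial.eval x ((Polynomial.bernoulli n).map (algebraMap ℚ ℝ))

/-!
Expanding `w_{n-1}(x + k/m; y)` binomially and using `n C(n-1, j) = (n-j) C(n, j)`, the left side
becomes a combination of the power sums `(n-j) ∑_{k<m} (mx + k)^(n-1-j)`. Each of these telescopes
to `B_{n-j}(mx + m) - B_{n-j}(mx)`, which the addition theorem for Bernoulli polynomials expands
as `∑_{r ≥ 1} C(n-j, r) m^r B_{n-j-r}(mx)`. Collecting the terms with `j + r = k`, the coefficient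
of `C(n, k) m^k B_{n-k}(mx)` is `y ∑_{j<k} C(k, j) w_j(y)`, which is `w_k(y)` by the recurrence
`S(n+1, k+1) = ∑_i C(n, i) S(i, k)` for Stirling numbers of the second kind.
-/

open Finset Nat

theorem stirling2_eq_stirlingSecond_s17 : ∀ n k, stirling2 n k = stirlingSecond n k
  | 0, 0 | 0, _ + 1 | _ + 1, 0 => rfl
  | n + 1, k + 1 => by
    rw [stirling2, stirlingSecond_succ_succ, stirling2_eq_stirlingSecond_s17 n (k + 1),
      stirling2_eq_stirlingSecond_s17 n k]

namespace Nat

theorem stirlingSecond_succ_succ_eq_sum_choose (n k : ℕ) :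
    stirlingSecond (n + 1) (k + 1) = ∑ i ∈ range (n + 1), n.choose i * stirlingSecond i k := by
  induction n generalizing k with
  | zero => simp [stirlingSecond_succ_succ]
  | succ n ih =>
    have hpascal := sum_choose_succ_nsmul (fun i _ ↦ stirlingSecond i k) n
    simp only [smul_eq_mul] at hpascal
    rw [hpascal, ← ih]
    cases k with
    | zero => simp [stirlingSecond_succ_succ]
    | succ k =>
      simp only [stirlingSecond_succ_succ (_ + 1), stirlingSecond_succ_succ _ k, mul_add,
        sum_add_distrib, mul_left_comm _ (k + 1), ← mul_sum, ← ih]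
      ring

theorem succ_mul_stirlingSecond_succ_eq_sum_choose (n k : ℕ) :
    (k + 1) * stirlingSecond n (k + 1) = ∑ i ∈ range n, n.choose i * stirlingSecond i k := by
  have h := stirlingSecond_succ_succ_eq_sum_choose n k
  rw [sum_range_succ, choose_self, one_mul, stirlingSecond_succ_succ] at h
  omega

theorem choose_mul_choose_sub_comm (s i r : ℕ) :
    s.choose i * (s - i).choose r = s.choose r * (s - r).choose i := by
  have hi := choose_mul (n := s) (Nat.le_add_right i r)
  have hr := choose_mul (n := s) (Nat.le_add_left r i)
  rw [Nat.add_sub_cancel_left] at hi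
  rw [Nat.add_sub_cancel] at hr
  rw [← hi, ← hr, choose_symm_add]

end Nat

theorem Finset.sum_range_sum_Icc_choose_mul {R : Type*} [CommSemiring R] (n : ℕ)
    (f : ℕ → ℕ → R) :
    ∑ j ∈ range n, ∑ r ∈ Icc 1 (n - j), (n.choose j * (n - j).choose r : R) * f j (j + r) =
      ∑ k ∈ Icc 1 n, ∑ j ∈ range k, (n.choose k * k.choose j : R) * f j k := by
  have hshift (j : ℕ) (hj : j ∈ range n) :
      ∑ r ∈ Icc 1 (n - j), (n.choose j * (n - j).choose r : R) * f j (j + r) =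
        ∑ k ∈ Icc (j + 1) n, (n.choose k * k.choose j : R) * f j k := by
    rw [← Nat.add_sub_cancel' (mem_range.1 hj).le, ← map_add_left_Icc, sum_map,
      Nat.add_sub_cancel' (mem_range.1 hj).le]
    refine sum_congr rfl fun r _ ↦ ?_
    rw [addLeftEmbedding_apply, ← cast_mul, ← cast_mul, choose_mul (Nat.le_add_right j r),
      Nat.add_sub_cancel_left]
  rw [sum_congr rfl hshift]
  refine sum_comm' fun j k ↦ ?_
  simp only [mem_range, mem_Icc]
  omega

theorem geomPoly_eq_sum_range {n N : ℕ} (h : n < N) (y : ℝ) :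
    geomPoly n y = ∑ k ∈ range N, (stirlingSecond n k : ℝ) * (k ! : ℝ) * y ^ k := by
  simp only [geomPoly, stirling2_eq_stirlingSecond_s17]
  refine sum_subset (range_subset_range.2 h) fun k _ hk ↦ ?_
  have hnk : n < k := by simpa using hk
  rw [stirlingSecond_eq_zero_of_lt hnk, cast_zero, zero_mul, zero_mul]

theorem geomPoly_eq_mul_sum_choose {n : ℕ} (hn : n ≠ 0) (y : ℝ) :
    geomPoly n y = y * ∑ i ∈ range n, (n.choose i : ℝ) * geomPoly i y := by
  have hcoeff (k : ℕ) : (stirlingSecond n (k + 1) : ℝ) * ((k + 1)! : ℝ)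
      = ∑ i ∈ range n, (n.choose i : ℝ) * (stirlingSecond i k * k !) := by
    calc (stirlingSecond n (k + 1) : ℝ) * ((k + 1)! : ℝ)
        = (((k + 1) * stirlingSecond n (k + 1) : ℕ) : ℝ) * k ! := by
          push_cast [factorial_succ]
          ring
      _ = _ := by
          rw [succ_mul_stirlingSecond_succ_eq_sum_choose, cast_sum, sum_mul]
          push_cast
          simp only [mul_assoc]
  calc geomPoly n y
      = ∑ k ∈ range n, (stirlingSecond n (k + 1) : ℝ) * ((k + 1)! : ℝ) * y ^ (k + 1) := by
        obtain ⟨n, rfl⟩ := exists_eq_succ_of_ne_zero hn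
        rw [geomPoly_eq_sum_range (n + 1).lt_succ_self, sum_range_succ', stirlingSecond_succ_zero,
          cast_zero, zero_mul, zero_mul, add_zero]
    _ = y * ∑ i ∈ range n, (n.choose i : ℝ) * geomPoly i y := by
        simp only [hcoeff, sum_mul, mul_sum]
        rw [sum_comm]
        refine sum_congr rfl fun i hi ↦ ?_
        rw [geomPoly_eq_sum_range (mem_range.1 hi), mul_sum, mul_sum]
        refine sum_congr rfl fun k _ ↦ ?_
        ring

theorem bernoulliPolyR_eq_sum (s : ℕ) (t : ℝ) :
    bernoulliPolyR s t = ∑ i ∈ range (s + 1), (bernoulli i : ℝ) * s.choose i * t ^ (s - i) := by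
  simp only [bernoulliPolyR, Polynomial.bernoulli, Polynomial.map_sum, Polynomial.eval_finsetSum,
    Polynomial.map_monomial, Polynomial.eval_monomial]
  push_cast
  rfl

theorem bernoulliPolyR_add_one (s : ℕ) (t : ℝ) :
    bernoulliPolyR s (t + 1) = bernoulliPolyR s t + s * t ^ (s - 1) := by
  have h := congrArg (Polynomial.aeval t) (Polynomial.bernoulli_comp_one_add_X s)
  simpa [bernoulliPolyR, Polynomial.eval_map_algebraMap, Polynomial.aeval_comp, add_comm] using h

theorem bernoulliPolyR_add (s : ℕ) (t u : ℝ) :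
    bernoulliPolyR s (t + u) =
      ∑ r ∈ range (s + 1), (s.choose r : ℝ) * u ^ r * bernoulliPolyR (s - r) t := by
  simp only [bernoulliPolyR_eq_sum, add_comm t u, add_pow, mul_sum]
  rw [sum_comm' (t' := range (s + 1)) (s' := fun r ↦ range (s - r + 1))]
  · refine sum_congr rfl fun r _ ↦ sum_congr rfl fun i _ ↦ ?_
    have hchoose := congrArg (Nat.cast : ℕ → ℝ) (choose_mul_choose_sub_comm s i r)
    push_cast at hchoose
    rw [Nat.sub_right_comm]
    linear_combination u ^ r * (bernoulli i : ℝ) * t ^ (s - r - i) * hchoose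
  · intro i r
    simp only [mem_range]
    omega

theorem sum_Icc_choose_mul_bernoulliPolyR (s : ℕ) (t u : ℝ) :
    ∑ r ∈ Icc 1 s, (s.choose r : ℝ) * u ^ r * bernoulliPolyR (s - r) t =
      bernoulliPolyR s (t + u) - bernoulliPolyR s t := by
  have hrange : range (s + 1) = insert 0 (Icc 1 s) := by
    ext r
    simp only [mem_range, mem_insert, mem_Icc]
    omega
  rw [bernoulliPolyR_add, hrange, sum_insert (by simp)]
  simp

theorem bernoulliPolyR_add_natCast_sub (s m : ℕ) (t : ℝ) :
    bernoulliPolyR s (t + m) - bernoulliPolyR s t = s * ∑ k ∈ range m, (t + k) ^ (s - 1) := by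
  have htelescope := sum_range_sub (fun k ↦ bernoulliPolyR s (t + k)) m
  rw [cast_zero, add_zero] at htelescope
  rw [mul_sum, ← htelescope]
  refine sum_congr rfl fun k _ ↦ ?_
  rw [cast_succ, ← add_assoc, bernoulliPolyR_add_one, add_sub_cancel_left]

theorem pow_mul_geomPoly2 (N : ℕ) (c x y : ℝ) :
    c ^ N * geomPoly2 N x y =
      ∑ j ∈ range (N + 1), (N.choose j : ℝ) * geomPoly j y * c ^ j * (c * x) ^ (N - j) := by
  rw [geomPoly2, mul_sum]
  refine sum_congr rfl fun j hj ↦ ?_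
  rw [← pow_mul_pow_sub c (le_of_lt_succ (mem_range.1 hj)), mul_pow]
  ring

theorem pow_mul_sum_geomPoly2_add_div (N m : ℕ) (x y : ℝ) :
    (m : ℝ) ^ N * ∑ k ∈ range m, geomPoly2 N (x + k / m) y * ((N + 1 : ℕ) * y) =
      ∑ j ∈ range (N + 1), ((N + 1).choose j * geomPoly j y * y * (m : ℝ) ^ j) *
        ((N + 1 - j : ℕ) * ∑ k ∈ range m, ((m : ℝ) * x + k) ^ (N - j)) := by
  have hexpand (k : ℕ) (hk : k ∈ range m) :
      (m : ℝ) ^ N * (geomPoly2 N (x + k / m) y * ((N + 1 : ℕ) * y)) =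
        ∑ j ∈ range (N + 1),
          (N.choose j : ℝ) * geomPoly j y * m ^ j * (m * x + k) ^ (N - j) * ((N + 1 : ℕ) * y) := by
    have hm : (m : ℝ) ≠ 0 := Nat.cast_ne_zero.2 (ne_zero_of_lt (mem_range.1 hk))
    rw [← mul_assoc, pow_mul_geomPoly2, mul_add, mul_div_cancel₀ _ hm, sum_mul]
  rw [mul_sum, sum_congr rfl hexpand, sum_comm]
  refine sum_congr rfl fun j _ ↦ ?_
  have hchoose : ((N + 1 : ℕ) : ℝ) * N.choose j = (N + 1).choose j * (N + 1 - j : ℕ) := by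
    exact_mod_cast (mul_comm _ _).trans (choose_mul_succ_eq N j)
  rw [mul_sum, mul_sum]
  refine sum_congr rfl fun k _ ↦ ?_
  linear_combination geomPoly j y * y * (m : ℝ) ^ j * (m * x + k) ^ (N - j) * hchoose

theorem geomPoly2_raabe_general (n : ℕ) (m : ℕ) (x y : ℝ) :
    (m : ℝ) ^ (n - 1) * ∑ k ∈ Finset.range m, geomPoly2 (n - 1) (x + k / m) y * (n * y)
      = ∑ k ∈ Finset.Icc 1 n,
          (n.choose k : ℝ) * (m : ℝ) ^ k * bernoulliPolyR (n - k) (m * x) * geomPoly k y := by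
  rcases n with _ | N
  · simp
  rw [Nat.add_sub_cancel, pow_mul_sum_geomPoly2_add_div]
  calc _ = ∑ j ∈ range (N + 1), ∑ r ∈ Icc 1 (N + 1 - j),
          ((N + 1).choose j * (N + 1 - j).choose r : ℝ) *
            ((m : ℝ) ^ (j + r) * bernoulliPolyR (N + 1 - (j + r)) (m * x) * (y * geomPoly j y)) := by
        refine sum_congr rfl fun j _ ↦ ?_
        rw [show N - j = N + 1 - j - 1 by omega, ← bernoulliPolyR_add_natCast_sub,
          ← sum_Icc_choose_mul_bernoulliPolyR, mul_sum]
        refine sum_congr rfl fun r _ ↦ ?_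
        rw [Nat.sub_sub, pow_add]
        ring
    _ = ∑ k ∈ Icc 1 (N + 1), ∑ j ∈ range k, ((N + 1).choose k * k.choose j : ℝ) *
            ((m : ℝ) ^ k * bernoulliPolyR (N + 1 - k) (m * x) * (y * geomPoly j y)) :=
        sum_range_sum_Icc_choose_mul (N + 1) fun j k ↦
          (m : ℝ) ^ k * bernoulliPolyR (N + 1 - k) (m * x) * (y * geomPoly j y)
    _ = _ := by
        refine sum_congr rfl fun k hk ↦ ?_
        rw [geomPoly_eq_mul_sum_choose (one_le_iff_ne_zero.1 (mem_Icc.1 hk).1), mul_sum, mul_sum]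
        refine sum_congr rfl fun j _ ↦ ?_
        ring

theorem geomPoly2_raabe (n p : ℕ) (hn : 1 ≤ n) (hp : 1 ≤ p) (m : ℕ) (hm : 1 ≤ m)
    (x y : ℝ) :
    (m : ℝ) ^ (n - 1) * ∑ k ∈ Finset.range m, geomPoly2 (n - 1) (x + k / m) y * (n * y)
      = ∑ k ∈ Finset.Icc 1 n,
          (n.choose k : ℝ) * (m : ℝ) ^ k * bernoulliPolyR (n - k) (m * x) * geomPoly k y :=
  geomPoly2_raabe_general n m x y
end
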